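/- Completeness of the algorithm: for any program P, if there is a fact-set step sequence from ∅ to D under P and D is saturated, then there is an algorithmic step sequence from ⊥ to the promotion (D)⁺ under P, and (D)⁺ is a model of P (T_P((D)⁺) = {(D)⁺}). -/

import Mathlib

open scoped Classical

namespace FCLP

/-! ### Terms -/

/-- Ground (Herbrand) terms: uninterpreted function symbols applied to ground terms. -/
inductive GTerm : Type where
  | func : ℕ → List GTerm → GTerm

/-- Terms possibly containing variables. -/
inductive VTerm : Type where
  | var : ℕ → VTerm
  | func : ℕ → List VTerm → VTerm

/-- A substitution is a total map from variables to ground terms. -/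
abbrev Subst := ℕ → GTerm

mutual
  /-- Applying a substitution to a term. -/
  def VTerm.subst (σ : Subst) : VTerm → GTerm
    | .var x => σ x
    | .func f args => .func f (VTerm.substList σ args)
  def VTerm.substList (σ : Subst) : List VTerm → List GTerm
    | [] => []
    | t :: ts => VTerm.subst σ t :: VTerm.substList σ ts
end

/-- The variable `x` occurs in the term. -/
inductive VTerm.HasVar : VTerm → ℕ → Prop where
  | var (x : ℕ) : VTerm.HasVar (.var x) x
  | func {f : ℕ} {args : List VTerm} {t : VTerm} {x : ℕ} :
      t ∈ args → VTerm.HasVar t x → VTerm.HasVar (.func f args) x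

/-! ### Attributes, facts, rules, programs -/

/-- An attribute `p(t₁,...,tₙ)`: a predicate applied to ground terms. -/
structure Attr where
  pred : ℕ
  args : List GTerm

/-- A fact `p(t̄) is v`. -/
structure Fact where
  attr : Attr
  value : GTerm

/-- A premise `p(t̄) is v`, possibly containing variables. -/
structure VAtom where
  pred : ℕ
  args : List VTerm
  value : VTerm

def VAtom.subst (σ : Subst) (A : VAtom) : Fact :=
  ⟨⟨A.pred, A.args.map (VTerm.subst σ)⟩, A.value.subst σ⟩

def VAtom.HasVar (A : VAtom) (x : ℕ) : Prop :=
  (∃ t ∈ A.args, t.HasVar x) ∨ A.value.HasVar x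

/-- A rule head: open `p(t̄) is? v` or closed `p(t̄) is {v₁,...,vₘ}`. -/
inductive Head : Type where
  | opn : ℕ → List VTerm → VTerm → Head
  | closed : ℕ → List VTerm → List VTerm → Head

def Head.HasVar : Head → ℕ → Prop
  | .opn _ args v, x => (∃ t ∈ args, t.HasVar x) ∨ v.HasVar x
  | .closed _ args vs, x => (∃ t ∈ args, t.HasVar x) ∨ ∃ v ∈ vs, v.HasVar x

/-- The ground attribute of a rule head under a substitution. -/
def Head.groundAttr (σ : Subst) : Head → Attr
  | .opn p args _ => ⟨p, args.map (VTerm.subst σ)⟩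
  | .closed p args _ => ⟨p, args.map (VTerm.subst σ)⟩

/-- A rule `H ← F` with a finite collection of premises. -/
structure Rule where
  head : Head
  prems : List VAtom

/-- Wellformedness: closed heads offer at least one value, and every
variable in the head occurs in a premise. -/
def Rule.WF (r : Rule) : Prop :=
  (∀ x, r.head.HasVar x → ∃ A ∈ r.prems, A.HasVar x) ∧
  (∀ p args vs, r.head = .closed p args vs → vs ≠ [])

/-- A program is a set of rules. -/
abbrev Program := Set Rule

/-- A program is a *finite* set of *wellformed* rules. -/
def Program.WFP (P : Program) : Prop := P.Finite ∧ ∀ r ∈ P, r.WF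

/-! ### Fact-set semantics -/

/-- A set of facts is consistent when each attribute has at most one value. -/
def Consistent (D : Set Fact) : Prop :=
  ∀ f ∈ D, ∀ g ∈ D, f.attr = g.attr → f = g

/-- `σ` satisfies the premises `F` in the fact-set database `D`. -/
def satF (σ : Subst) (F : List VAtom) (D : Set Fact) : Prop :=
  ∀ A ∈ F, A.subst σ ∈ D

/-- Fact-set evolution `D →_P S`. -/
inductive Evolve (P : Program) : Set Fact → Set (Set Fact) → Prop where
  | triv (D : Set Fact) : Evolve P D {D}
  | closed {D : Set Fact} {r : Rule} {p : ℕ} {args vs : List VTerm} {σ : Subst} :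
      r ∈ P → r.head = .closed p args vs → satF σ r.prems D →
      Evolve P D
        { E | ∃ v ∈ vs,
            E = insert (⟨⟨p, args.map (VTerm.subst σ)⟩, VTerm.subst σ v⟩ : Fact) D ∧
            Consistent E }
  | opn {D : Set Fact} {r : Rule} {p : ℕ} {args : List VTerm} {v : VTerm} {σ : Subst} :
      r ∈ P → r.head = .opn p args v → satF σ r.prems D →
      Evolve P D
        ({D} ∪ { E | E = insert (⟨⟨p, args.map (VTerm.subst σ)⟩, VTerm.subst σ v⟩ : Fact) D ∧
                     Consistent E })

/-- `P` allows `D` to step to `D'`. -/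
def Step (P : Program) (D D' : Set Fact) : Prop := ∃ S, Evolve P D S ∧ D' ∈ S

/-- A database is saturated when its only evolution is the singleton of itself. -/
def Saturated (P : Program) (D : Set Fact) : Prop := ∀ S, Evolve P D S → S = {D}

/-- A solution: a saturated database reachable from `∅` by a (finite) step sequence. -/
def Solution (P : Program) (D : Set Fact) : Prop :=
  Relation.ReflTransGen (Step P) ∅ D ∧ Saturated P D

/-! ### Constraints and constraint databases -/

/-- A constraint: `just t` or `noneOf X`. -/
inductive Constraint : Type where
  | just : GTerm → Constraint
  | noneOf : Set GTerm → Constraint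

/-- The order on constraints. -/
def Constraint.le : Constraint → Constraint → Prop
  | .noneOf X, .noneOf Y => X ⊆ Y
  | .noneOf X, .just t => t ∉ X
  | .just t, .just t' => t = t'
  | .just _, .noneOf _ => False

instance : LE Constraint := ⟨Constraint.le⟩

/-- Least upper bound of a (compatible) set of constraints: if some `just t` is present
it is the lub; otherwise it is `noneOf` of the union. -/
noncomputable def Constraint.lub (C : Set Constraint) : Constraint :=
  if h : ∃ t, Constraint.just t ∈ C then .just h.choose
  else .noneOf (⋃₀ { X | Constraint.noneOf X ∈ C })

/-- A constraint database: a map from ground attributes to constraints,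
ordered pointwise (via the `Pi` order). -/
abbrev CDB := Attr → Constraint

/-- The least constraint database: every attribute maps to `noneOf ∅`. -/
def cdbBot : CDB := fun _ => .noneOf ∅

/-- Pointwise least upper bound of a (compatible) set of constraint databases. -/
noncomputable def CDB.lub (S : Set CDB) : CDB :=
  fun a => Constraint.lub ((fun Δ => Δ a) '' S)

/-- A subset of a poset is compatible when it has an upper bound. -/
def Compatible {α : Type*} [LE α] (X : Set α) : Prop := ∃ y, ∀ x ∈ X, x ≤ y

/-- Binary compatibility. -/
def Compat {α : Type*} [LE α] (x y : α) : Prop := Compatible ({x, y} : Set α)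

/-- A choice set: a pairwise-incompatible set of constraint databases. -/
def IsChoiceSet (𝒞 : Set CDB) : Prop :=
  ∀ D ∈ 𝒞, ∀ E ∈ 𝒞, Compat D E → D = E

/-- The order on choice sets. -/
def ChoiceLE (𝒞₁ 𝒞₂ : Set CDB) : Prop :=
  ∀ D₂ ∈ 𝒞₂, ∃ D₁ ∈ 𝒞₁, D₁ ≤ D₂

/-- Least upper bound of an indexed family of choice sets:
`⋁ᵢ 𝒞ᵢ = { ⋁ Im(f) : f ∈ ∏ᵢ 𝒞ᵢ, Im(f) compatible }`. -/
noncomputable def ChoiceJoin {I : Type*} (𝒞 : I → Set CDB) : Set CDB :=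
  { E | ∃ f : I → CDB, (∀ i, f i ∈ 𝒞 i) ∧ Compatible (Set.range f) ∧
        E = CDB.lub (Set.range f) }

/-- Least upper bound of a set of choice sets. -/
noncomputable def ChoiceSJoin (S : Set (Set CDB)) : Set CDB :=
  ChoiceJoin (fun C : S => (C : Set CDB))

/-- Greatest lower bound of a set of choice sets:
`⋀ X = ⋁ {𝒞 : ∀ x ∈ X, 𝒞 ≤ x}` (join over choice-set lower bounds). -/
noncomputable def ChoiceMeet (S : Set (Set CDB)) : Set CDB :=
  ChoiceSJoin { C | IsChoiceSet C ∧ ∀ X ∈ S, ChoiceLE C X }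

/-! ### Immediate consequence -/

/-- `σ` satisfies `F` in the constraint database `Δ`. -/
def satC (σ : Subst) (F : List VAtom) (Δ : CDB) : Prop :=
  ∀ A ∈ F, Constraint.just (A.value.subst σ) ≤ Δ ⟨A.pred, A.args.map (VTerm.subst σ)⟩

/-- The constraint database mapping `a` to `c` and every other attribute to `noneOf ∅`. -/
noncomputable def unitCDB (a : Attr) (c : Constraint) : CDB :=
  fun a' => if a' = a then c else .noneOf ∅

/-- The choice set `⟨σH⟩` determined by a ground rule head. -/
noncomputable def headChoice (σ : Subst) : Head → Set CDB
  | .opn p args v =>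
      { unitCDB ⟨p, args.map (VTerm.subst σ)⟩ (.just (v.subst σ)),
        unitCDB ⟨p, args.map (VTerm.subst σ)⟩ (.noneOf {v.subst σ}) }
  | .closed p args vs =>
      { Δ | ∃ v ∈ vs, Δ = unitCDB ⟨p, args.map (VTerm.subst σ)⟩ (.just (v.subst σ)) }

/-- The immediate consequence operator
`T_P(Δ) = {Δ} ∨ ⋁{ ⟨σH⟩ : (H ← F) ∈ P, σ satisfies F in Δ }`. -/
noncomputable def TP (P : Program) (Δ : CDB) : Set CDB :=
  ChoiceSJoin
    (insert {Δ} { C | ∃ r ∈ P, ∃ σ : Subst, satC σ r.prems Δ ∧ C = headChoice σ r.head })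

/-- The attribute-specific immediate consequence operator `T_{P[a]}`. -/
noncomputable def TPa (P : Program) (a : Attr) (Δ : CDB) : Set CDB :=
  ChoiceSJoin
    { C | ∃ r ∈ P, ∃ σ : Subst, satC σ r.prems Δ ∧ r.head.groundAttr σ = a ∧
          C = headChoice σ r.head }

/-- The lifted immediate consequence operator `T_P*(𝒞) = ⋃_{Δ ∈ 𝒞} T_P(Δ)`. -/
noncomputable def TPs (P : Program) (𝒞 : Set CDB) : Set CDB :=
  { E | ∃ Δ ∈ 𝒞, E ∈ TP P Δ }

/-- The least fixed point of `T_P*`, defined à la Knaster–Tarski as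
`⋀ {𝒞 : T_P*(𝒞) ≤ 𝒞}`. -/
noncomputable def lfpTPs (P : Program) : Set CDB :=
  ChoiceMeet { C | IsChoiceSet C ∧ ChoiceLE (TPs P C) C }

/-! ### Positive and finite constraint databases, promotion and erasure -/

/-- A constraint database is positive when `noneOf X` only occurs with `X = ∅`. -/
def CDBPositive (Δ : CDB) : Prop := ∀ a X, Δ a = .noneOf X → X = ∅

/-- A constraint database is finite. -/
def CDBFinite (Δ : CDB) : Prop :=
  { a | Δ a ≠ .noneOf ∅ }.Finite ∧ ∀ a X, Δ a = .noneOf X → X.Finite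

/-- Promotion of a (consistent) fact set to a constraint database. -/
noncomputable def promote (D : Set Fact) : CDB :=
  fun a => if h : ∃ v, (⟨a, v⟩ : Fact) ∈ D then .just h.choose else .noneOf ∅

/-- Erasure of a constraint database to a fact set. -/
def eraseCDB (Δ : CDB) : Set Fact := { f | Δ f.attr = .just f.value }

/-! ### The abstract algorithm -/

/-- `P` allows `Δ` to take an algorithmic step to any `Δ' ∈ {Δ} ∨ T_{P[a]}(Δ)`
for some attribute `a`, provided `T_P(Δ) ≠ ∅`. -/
noncomputable def AlgStep (P : Program) (Δ Δ' : CDB) : Prop :=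
  TP P Δ ≠ ∅ ∧ ∃ a : Attr, Δ' ∈ ChoiceSJoin {({Δ} : Set CDB), TPa P a Δ}

/-! ### Datalog -/

/-- A datalog atom, possibly with variables. -/
structure DAtom where
  pred : ℕ
  args : List VTerm

/-- A ground datalog atom. -/
structure GAtom where
  pred : ℕ
  args : List GTerm

def DAtom.subst (σ : Subst) (A : DAtom) : GAtom := ⟨A.pred, A.args.map (VTerm.subst σ)⟩

/-- A datalog rule `p(t̄) ← p₁(t̄₁), ..., pₙ(t̄ₙ)`. -/
structure DRule where
  head : DAtom
  prems : List DAtom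

/-- Every variable of the head appears in a premise. -/
def DRule.WF (r : DRule) : Prop :=
  ∀ x, (∃ t ∈ r.head.args, t.HasVar x) → ∃ A ∈ r.prems, ∃ t ∈ A.args, t.HasVar x

/-- The datalog immediate consequence operator. -/
def dImmCons (P : Set DRule) (X : Set GAtom) : Set GAtom :=
  { g | ∃ r ∈ P, ∃ σ : Subst, (∀ A ∈ r.prems, A.subst σ ∈ X) ∧ g = r.head.subst σ }

/-- The least model of a datalog program: the least fixed point of `dImmCons`. -/
def dModel (P : Set DRule) : Set GAtom := ⋂₀ { X | dImmCons P X ⊆ X }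

/-- Translation of a datalog program to a finite-choice logic program, using the
constant with (fresh) function symbol `u` as the value `unit`. -/
def trDatalog (u : ℕ) (P : Set DRule) : Program :=
  { r | ∃ dr ∈ P,
      r = ⟨Head.closed dr.head.pred dr.head.args [VTerm.func u []],
           dr.prems.map (fun A => ⟨A.pred, A.args, VTerm.func u []⟩)⟩ }

/-! ### Answer set programming -/

/-- A ground ASP rule `p ← p₁,...,pₙ, ¬q₁,...,¬qₘ` over propositional atoms. -/
structure ASPRule where
  head : ℕ
  pos : List ℕ
  neg : List ℕ

/-- One step of the immediate consequence operator of the reduct `P^X`. -/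
def reductCons (P : Set ASPRule) (X : Set ℕ) (Y : Set ℕ) : Set ℕ :=
  { p | ∃ r ∈ P, r.head = p ∧ (∀ q ∈ r.pos, q ∈ Y) ∧ (∀ q ∈ r.neg, q ∉ X) }

/-- The least model of the reduct `P^X`. -/
def reductModel (P : Set ASPRule) (X : Set ℕ) : Set ℕ :=
  ⋂₀ { Y | reductCons P X Y ⊆ Y }

/-- `X` is a stable model of `P` when the least model of the reduct `P^X` equals `X`. -/
def StableModel (P : Set ASPRule) (X : Set ℕ) : Prop := reductModel P X = X

/-- The fresh constant `tt` (as a ground term). -/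
def ttT : GTerm := .func 0 []
/-- The fresh constant `ff` (as a ground term). -/
def ffT : GTerm := .func 1 []
/-- The constant `tt` as a (closed) term of the rule language. -/
def ttV : VTerm := .func 0 []
/-- The constant `ff` as a (closed) term of the rule language. -/
def ffV : VTerm := .func 1 []

/-- The premise `p is tt`. -/
def posPrem (p : ℕ) : VAtom := ⟨p, [], ttV⟩
/-- The premise `q is ff`. -/
def negPrem (q : ℕ) : VAtom := ⟨q, [], ffV⟩

/-- Translation of an ASP program to a finite-choice logic program: each rule
`p ← p₁,...,pₙ, ¬q₁,...,¬qₘ` becomes `m` open rules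
`qⱼ is? ff ← p₁ is tt,...,pₙ is tt, q₁ is ff,...,q_{j-1} is ff` and one closed rule
`p is {tt} ← p₁ is tt,...,pₙ is tt, q₁ is ff,...,qₘ is ff`. -/
def trASP (P : Set ASPRule) : Program :=
  { r | ∃ ar ∈ P,
      (∃ j : Fin ar.neg.length,
        r = ⟨Head.opn (ar.neg.get j) [] ffV,
             ar.pos.map posPrem ++ (ar.neg.take j.val).map negPrem⟩) ∨
      r = ⟨Head.closed ar.head [] [ttV],
           ar.pos.map posPrem ++ ar.neg.map negPrem⟩ }


/-!
Every database on a fact-set run ending in `D` is contained in `D`, which is consistent.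
Saturation of `D` means that for every rule instance whose premises hold in `D`, the head
attribute `a` already has a value `w` in `D`; so `(D)⁺` lies above some member of each head
choice set, and above each member compatible with it. The first fact gives `T_P ≠ ∅` along
the run, and for a fact-set step adding `a is w` the constraint database `a ↦ just w` is a
member of `T_{P[a]}`, whose join with the current promotion is the next promotion. Both facts
together give `T_P((D)⁺) = {(D)⁺}`.
-/

namespace Constraint

instance : PartialOrder Constraint where
  le := Constraint.le
  le_refl c := by
    cases c with
    | just t => exact rfl
    | noneOf X => exact subset_rfl
  le_trans a b c := by
    cases a <;> cases b <;> cases c <;>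
      first
      | exact fun h₁ h₂ => h₁.trans h₂
      | exact fun h₁ h₂ hx => h₂ (h₁ hx)
      | exact fun h₁ h₂ => h₂ ▸ h₁
      | exact fun _ h => h.elim
      | exact fun h => h.elim
  le_antisymm a b := by
    cases a <;> cases b <;>
      first
      | exact fun h _ => congrArg just h
      | exact fun h₁ h₂ => congrArg noneOf (h₁.antisymm h₂)
      | exact fun _ h => h.elim
      | exact fun h => h.elim

instance : OrderBot Constraint where
  bot := noneOf ∅
  bot_le c := by
    cases c with
    | just t => exact Set.notMem_empty t
    | noneOf X => exact Set.empty_subset X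

lemma just_le_iff {t : GTerm} {c : Constraint} : just t ≤ c ↔ c = just t := by
  cases c with
  | just t' => exact ⟨fun h => congrArg just h.symm, fun h => (just.inj h).symm⟩
  | noneOf X => exact iff_of_false id nofun

lemma lub_eq_of_isGreatest {C : Set Constraint} {x : Constraint} (h : IsGreatest C x) :
    lub C = x := by
  obtain ⟨hx, hle⟩ := h
  cases x with
  | just t =>
      have hex : ∃ t', just t' ∈ C := ⟨t, hx⟩
      rw [lub, dif_pos hex]
      exact just_le_iff.mp (hle hex.choose_spec) ▸ rfl
  | noneOf X =>
      have hnex : ¬ ∃ t, just t ∈ C := fun ⟨t, ht⟩ => hle ht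
      rw [lub, dif_neg hnex]
      refine congrArg noneOf (Set.Subset.antisymm ?_ fun y hy => ⟨X, hx, hy⟩)
      rintro y ⟨Y, hY, hyY⟩
      exact (hle hY : Y ⊆ X) hyY

end Constraint

lemma CDB.lub_eq {S : Set CDB} {Δ : CDB} (hle : ∀ e ∈ S, e ≤ Δ)
    (hcover : ∀ a, ∃ e ∈ S, e a = Δ a) : CDB.lub S = Δ := by
  funext a
  obtain ⟨e, he, hea⟩ := hcover a
  refine Constraint.lub_eq_of_isGreatest ⟨⟨e, he, hea⟩, ?_⟩
  rintro _ ⟨e', he', rfl⟩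
  exact hle e' he' a

lemma mem_choiceSJoin_of_forall {S : Set (Set CDB)} {Δ : CDB} (f : S → CDB)
    (hf : ∀ C : S, f C ∈ (C : Set CDB)) (hle : ∀ C, f C ≤ Δ) (hcover : ∀ a, ∃ C, f C a = Δ a) :
    Δ ∈ ChoiceSJoin S := by
  have hle' : ∀ e ∈ Set.range f, e ≤ Δ := by
    rintro _ ⟨C, rfl⟩
    exact hle C
  refine ⟨f, hf, ⟨Δ, hle'⟩, (CDB.lub_eq hle' fun a => ?_).symm⟩
  obtain ⟨C, hC⟩ := hcover a
  exact ⟨f C, ⟨C, rfl⟩, hC⟩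

lemma mem_choiceSJoin_of_le {S : Set (Set CDB)} {C₀ : Set CDB} {Δ : CDB} (hC₀ : C₀ ∈ S)
    (hΔ : Δ ∈ C₀) (h : ∀ C ∈ S, ∃ e ∈ C, e ≤ Δ) : Δ ∈ ChoiceSJoin S := by
  choose g hgC hgle using fun C : S => h C C.2
  refine mem_choiceSJoin_of_forall (Function.update g ⟨C₀, hC₀⟩ Δ) (fun C => ?_) (fun C => ?_)
    fun a => ⟨⟨C₀, hC₀⟩, by rw [Function.update_self]⟩
  · rcases eq_or_ne C ⟨C₀, hC₀⟩ with rfl | hC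
    · rwa [Function.update_self]
    · rw [Function.update_of_ne hC]
      exact hgC C
  · rcases eq_or_ne C ⟨C₀, hC₀⟩ with rfl | hC
    · rw [Function.update_self]
    · rw [Function.update_of_ne hC]
      exact hgle C

lemma mem_choiceSJoin_pair {Δ₀ t Δ : CDB} {T : Set CDB} (ht : t ∈ T) (h₀ : Δ₀ ≤ Δ)
    (ht' : t ≤ Δ) (hcover : ∀ a, Δ₀ a = Δ a ∨ t a = Δ a) :
    Δ ∈ ChoiceSJoin {({Δ₀} : Set CDB), T} := by
  have hT : T ∈ ({{Δ₀}, T} : Set (Set CDB)) := Set.mem_insert_of_mem _ rfl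
  have h₀S : ({Δ₀} : Set CDB) ∈ ({{Δ₀}, T} : Set (Set CDB)) := Set.mem_insert _ _
  have hf₀ : (if t ∈ ({Δ₀} : Set CDB) then t else Δ₀) = Δ₀ := by
    split_ifs with h
    exacts [h, rfl]
  refine mem_choiceSJoin_of_forall (S := {{Δ₀}, T}) (fun C => if t ∈ (C : Set CDB) then t else Δ₀)
    (fun ⟨C, hC⟩ => ?_) (fun C => ?_) fun a => ?_
  · split_ifs with h
    · exact h
    · rcases hC with rfl | rfl
      exacts [rfl, absurd ht h]
  · split_ifs
    exacts [ht', h₀]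
  · rcases hcover a with h | h
    · exact ⟨⟨_, h₀S⟩, (congrFun hf₀ a).trans h⟩
    · exact ⟨⟨T, hT⟩, (congrFun (if_pos ht) a).trans h⟩

lemma choiceSJoin_nonempty {S : Set (Set CDB)} {y : CDB} (h : ∀ C ∈ S, ∃ e ∈ C, e ≤ y) :
    (ChoiceSJoin S).Nonempty := by
  choose g hgC hgle using fun C : S => h C C.2
  refine ⟨_, g, hgC, ⟨y, ?_⟩, rfl⟩
  rintro _ ⟨C, rfl⟩
  exact hgle C

lemma choiceSJoin_subset_singleton {S : Set (Set CDB)} {Δ : CDB} (hΔ : ({Δ} : Set CDB) ∈ S)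
    (h : ∀ C ∈ S, ∀ e ∈ C, Compat e Δ → e ≤ Δ) : ChoiceSJoin S ⊆ {Δ} := by
  rintro _ ⟨f, hf, ⟨y, hy⟩, rfl⟩
  have hΔf : f ⟨_, hΔ⟩ = Δ := hf ⟨_, hΔ⟩
  have hle : ∀ C, f C ≤ Δ := fun C => h C C.2 (f C) (hf C) ⟨y, by
    rintro _ (rfl | rfl)
    exacts [hy _ ⟨C, rfl⟩, hy _ ⟨_, hΔf⟩]⟩
  exact CDB.lub_eq (by rintro _ ⟨C, rfl⟩; exact hle C) fun a => ⟨Δ, ⟨_, hΔf⟩, rfl⟩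

@[simp]
lemma unitCDB_apply_self (a : Attr) (c : Constraint) : unitCDB a c a = c := if_pos rfl

lemma unitCDB_apply_of_ne {a a' : Attr} (c : Constraint) (h : a' ≠ a) :
    unitCDB a c a' = ⊥ := if_neg h

lemma unitCDB_le_iff {a : Attr} {c : Constraint} {Δ : CDB} : unitCDB a c ≤ Δ ↔ c ≤ Δ a := by
  refine ⟨fun h => unitCDB_apply_self a c ▸ h a, fun h a' => ?_⟩
  rcases eq_or_ne a' a with rfl | ha
  · rwa [unitCDB_apply_self]
  · rw [unitCDB_apply_of_ne c ha]
    exact bot_le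

lemma unitCDB_le_of_compat {a : Attr} {c : Constraint} {Δ : CDB} {w : GTerm}
    (hΔ : Δ a = Constraint.just w) (h : Compat (unitCDB a c) Δ) : unitCDB a c ≤ Δ := by
  obtain ⟨y, hy⟩ := h
  have hya : y a = Constraint.just w := Constraint.just_le_iff.mp (hΔ ▸ hy Δ (by simp) a)
  rw [unitCDB_le_iff, hΔ, ← hya]
  simpa using hy _ (Set.mem_insert _ _) a

lemma exists_eq_unitCDB_of_mem_headChoice {σ : Subst} {H : Head} {e : CDB}
    (he : e ∈ headChoice σ H) : ∃ c, e = unitCDB (H.groundAttr σ) c := by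
  cases H with
  | opn p args v =>
      rcases he with rfl | rfl
      exacts [⟨_, rfl⟩, ⟨_, rfl⟩]
  | closed p args vs =>
      obtain ⟨v, -, rfl⟩ := he
      exact ⟨_, rfl⟩

lemma Consistent.mono {D₀ D₁ : Set Fact} (h : D₀ ⊆ D₁) (hD₁ : Consistent D₁) : Consistent D₀ :=
  fun f hf g hg => hD₁ f (h hf) g (h hg)

lemma Consistent.exists_conflict_of_not_insert {D : Set Fact} {f : Fact} (hD : Consistent D)
    (h : ¬ Consistent (insert f D)) : ∃ g ∈ D, g.attr = f.attr ∧ g.value ≠ f.value := by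
  by_contra! hno
  refine h ?_
  have hfD : ∀ g ∈ D, g.attr = f.attr → g = f := fun g hg ha => by
    cases g; cases f; cases ha; cases hno _ hg rfl; rfl
  rintro x (rfl | hx) y (rfl | hy) hxy
  · rfl
  · exact (hfD y hy hxy.symm).symm
  · exact hfD x hx hxy
  · exact hD x hx y hy hxy

lemma promote_eq_just {D : Set Fact} (hD : Consistent D) {a : Attr} {v : GTerm}
    (hv : (⟨a, v⟩ : Fact) ∈ D) : promote D a = Constraint.just v := by
  have hex : ∃ v', (⟨a, v'⟩ : Fact) ∈ D := ⟨v, hv⟩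
  rw [promote, dif_pos hex]
  exact congrArg (Constraint.just ∘ Fact.value) (hD _ hex.choose_spec _ hv rfl)

lemma promote_eq_bot {D : Set Fact} {a : Attr} (h : ∀ v, (⟨a, v⟩ : Fact) ∉ D) :
    promote D a = ⊥ :=
  dif_neg fun ⟨v, hv⟩ => h v hv

lemma promote_eq_just_iff {D : Set Fact} (hD : Consistent D) {a : Attr} {v : GTerm} :
    promote D a = Constraint.just v ↔ (⟨a, v⟩ : Fact) ∈ D := by
  refine ⟨fun h => ?_, promote_eq_just hD⟩
  by_cases hex : ∃ v', (⟨a, v'⟩ : Fact) ∈ D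
  · obtain ⟨v', hv'⟩ := hex
    rw [promote_eq_just hD hv', Constraint.just.injEq] at h
    rwa [← h]
  · rw [promote_eq_bot (not_exists.mp hex)] at h
    exact Constraint.noConfusion h

lemma promote_mono {D₀ D₁ : Set Fact} (h : D₀ ⊆ D₁) (hD₁ : Consistent D₁) :
    promote D₀ ≤ promote D₁ := by
  intro a
  by_cases hex : ∃ v, (⟨a, v⟩ : Fact) ∈ D₀
  · obtain ⟨v, hv⟩ := hex
    rw [promote_eq_just (hD₁.mono h) hv, promote_eq_just hD₁ (h hv)]
  · rw [promote_eq_bot (not_exists.mp hex)]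
    exact bot_le

lemma promote_insert_apply_of_ne {D : Set Fact} {f : Fact} (hD : Consistent (insert f D))
    {a : Attr} (ha : a ≠ f.attr) : promote (insert f D) a = promote D a := by
  by_cases hex : ∃ v, (⟨a, v⟩ : Fact) ∈ D
  · obtain ⟨v, hv⟩ := hex
    rw [promote_eq_just hD (Set.mem_insert_of_mem _ hv),
      promote_eq_just (hD.mono (Set.subset_insert _ _)) hv]
  · rw [promote_eq_bot (not_exists.mp hex), promote_eq_bot]
    rintro v (hv | hv)
    exacts [ha (congrArg Fact.attr hv), not_exists.mp hex v hv]

lemma promote_empty : promote (∅ : Set Fact) = cdbBot :=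
  funext fun _ => promote_eq_bot fun _ => Set.notMem_empty _

lemma satC_promote_iff {σ : Subst} {F : List VAtom} {D : Set Fact} (hD : Consistent D) :
    satC σ F (promote D) ↔ satF σ F D :=
  forall₂_congr fun _ _ => Constraint.just_le_iff.trans (promote_eq_just_iff hD)

lemma satF.mono {σ : Subst} {F : List VAtom} {D₀ D₁ : Set Fact} (hs : satF σ F D₀)
    (h : D₀ ⊆ D₁) : satF σ F D₁ :=
  fun A hA => h (hs A hA)

section Steps

variable {P : Program} {D₀ D₁ : Set Fact}

lemma Step.subset (h : Step P D₀ D₁) : D₀ ⊆ D₁ := by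
  obtain ⟨S, hev, hmem⟩ := h
  cases hev with
  | triv => exact (Set.mem_singleton_iff.mp hmem).ge
  | closed =>
      obtain ⟨v, -, rfl, -⟩ := hmem
      exact Set.subset_insert _ _
  | opn =>
      rcases hmem with hmem | ⟨rfl, -⟩
      exacts [(Set.mem_singleton_iff.mp hmem).ge, Set.subset_insert _ _]

lemma Step.consistent (h : Step P D₀ D₁) (hD₀ : Consistent D₀) : Consistent D₁ := by
  obtain ⟨S, hev, hmem⟩ := h
  cases hev with
  | triv => exact Set.mem_singleton_iff.mp hmem ▸ hD₀
  | closed => exact hmem.choose_spec.2.2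
  | opn =>
      rcases hmem with hmem | ⟨-, hcons⟩
      exacts [Set.mem_singleton_iff.mp hmem ▸ hD₀, hcons]

lemma consistent_of_reflTransGen_step (h : Relation.ReflTransGen (Step P) ∅ D₁) :
    Consistent D₁ := by
  induction h with
  | refl => exact fun f hf => absurd hf (Set.notMem_empty f)
  | tail _ hstep ih => exact hstep.consistent ih

end Steps

section Saturation

variable {P : Program} {D : Set Fact} {r : Rule} {σ : Subst}

lemma Saturated.mem_of_opn (hsat : Saturated P D) (hr : r ∈ P) {p : ℕ} {args : List VTerm}
    {v : VTerm} (hH : r.head = .opn p args v) (hs : satF σ r.prems D)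
    (hc : Consistent (insert ⟨⟨p, args.map (VTerm.subst σ)⟩, v.subst σ⟩ D)) :
    (⟨⟨p, args.map (VTerm.subst σ)⟩, v.subst σ⟩ : Fact) ∈ D := by
  have hmem : insert (⟨⟨p, args.map (VTerm.subst σ)⟩, v.subst σ⟩ : Fact) D ∈
      ({D} : Set (Set Fact)) := by
    rw [← hsat _ (Evolve.opn hr hH hs)]
    exact Or.inr ⟨rfl, hc⟩
  exact Set.insert_eq_self.mp (Set.mem_singleton_iff.mp hmem)

lemma Saturated.exists_mem_of_closed (hsat : Saturated P D) (hr : r ∈ P) {p : ℕ}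
    {args vs : List VTerm} (hH : r.head = .closed p args vs) (hs : satF σ r.prems D) :
    ∃ v ∈ vs, (⟨⟨p, args.map (VTerm.subst σ)⟩, v.subst σ⟩ : Fact) ∈ D := by
  have hD : D ∈ _ := (hsat _ (Evolve.closed hr hH hs)).symm ▸ Set.mem_singleton D
  obtain ⟨v, hv, hDv, -⟩ := hD
  exact ⟨v, hv, Set.insert_eq_self.mp hDv.symm⟩

lemma Saturated.exists_mem_groundAttr (hsat : Saturated P D) (hDc : Consistent D) (hr : r ∈ P)
    (hs : satF σ r.prems D) : ∃ w, (⟨r.head.groundAttr σ, w⟩ : Fact) ∈ D := by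
  rcases hH : r.head with ⟨p, args, v⟩ | ⟨p, args, vs⟩
  · by_cases hc : Consistent (insert ⟨⟨p, args.map (VTerm.subst σ)⟩, v.subst σ⟩ D)
    · exact ⟨_, hsat.mem_of_opn hr hH hs hc⟩
    · obtain ⟨⟨_, w⟩, hw, rfl, -⟩ := hDc.exists_conflict_of_not_insert hc
      exact ⟨w, hw⟩
  · obtain ⟨v, -, hv⟩ := hsat.exists_mem_of_closed hr hH hs
    exact ⟨_, hv⟩

lemma Saturated.exists_headChoice_le_promote (hsat : Saturated P D) (hDc : Consistent D)
    (hr : r ∈ P) (hs : satF σ r.prems D) : ∃ e ∈ headChoice σ r.head, e ≤ promote D := by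
  obtain ⟨w, hw⟩ := hsat.exists_mem_groundAttr hDc hr hs
  have hDw := promote_eq_just hDc hw
  rcases hH : r.head with ⟨p, args, v⟩ | ⟨p, args, vs⟩
  · rw [hH] at hDw
    change promote D ⟨p, args.map (VTerm.subst σ)⟩ = _ at hDw
    by_cases hwv : w = v.subst σ
    · refine ⟨_, Set.mem_insert _ _, unitCDB_le_iff.mpr ?_⟩
      rw [hDw, hwv]
    · refine ⟨_, Set.mem_insert_of_mem _ rfl, unitCDB_le_iff.mpr ?_⟩
      rw [hDw]
      exact fun h => hwv (Set.mem_singleton_iff.mp h)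
  · obtain ⟨v, hv, hvD⟩ := hsat.exists_mem_of_closed hr hH hs
    exact ⟨_, ⟨v, hv, rfl⟩, unitCDB_le_iff.mpr (promote_eq_just hDc hvD).ge⟩

lemma Saturated.headChoice_le_promote_of_compat (hsat : Saturated P D) (hDc : Consistent D)
    (hr : r ∈ P) (hs : satF σ r.prems D) {e : CDB} (he : e ∈ headChoice σ r.head)
    (hc : Compat e (promote D)) : e ≤ promote D := by
  obtain ⟨c, rfl⟩ := exists_eq_unitCDB_of_mem_headChoice he
  obtain ⟨w, hw⟩ := hsat.exists_mem_groundAttr hDc hr hs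
  exact unitCDB_le_of_compat (promote_eq_just hDc hw) hc

lemma Saturated.TP_promote_eq_singleton (hsat : Saturated P D) (hDc : Consistent D) :
    TP P (promote D) = {promote D} := by
  refine (choiceSJoin_subset_singleton (Set.mem_insert _ _) ?_).antisymm
    (Set.singleton_subset_iff.mpr (mem_choiceSJoin_of_le (Set.mem_insert _ _) rfl ?_))
  · rintro C (rfl | ⟨r, hr, σ, hs, rfl⟩) e he hc
    · exact (Set.mem_singleton_iff.mp he).le
    · exact hsat.headChoice_le_promote_of_compat hDc hr ((satC_promote_iff hDc).mp hs) he hc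
  · rintro C (rfl | ⟨r, hr, σ, hs, rfl⟩)
    · exact ⟨_, rfl, le_rfl⟩
    · exact hsat.exists_headChoice_le_promote hDc hr ((satC_promote_iff hDc).mp hs)

variable {b c : Set Fact}

lemma Saturated.TP_promote_nonempty (hsat : Saturated P D) (hDc : Consistent D)
    (hbD : b ⊆ D) : (TP P (promote b)).Nonempty := by
  refine choiceSJoin_nonempty (y := promote D) ?_
  rintro C (rfl | ⟨r, hr, σ, hs, rfl⟩)
  · exact ⟨_, rfl, promote_mono hbD hDc⟩
  · exact hsat.exists_headChoice_le_promote hDc hr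
      (((satC_promote_iff (hDc.mono hbD)).mp hs).mono hbD)

lemma Saturated.unitCDB_mem_TPa (hsat : Saturated P D) (hDc : Consistent D) (hbD : b ⊆ D)
    (hr : r ∈ P) (hs : satF σ r.prems b) {w : GTerm}
    (hw : unitCDB (r.head.groundAttr σ) (.just w) ∈ headChoice σ r.head)
    (hwD : (⟨r.head.groundAttr σ, w⟩ : Fact) ∈ D) :
    unitCDB (r.head.groundAttr σ) (.just w) ∈ TPa P (r.head.groundAttr σ) (promote b) := by
  have hb := hDc.mono hbD
  refine mem_choiceSJoin_of_le ⟨r, hr, σ, (satC_promote_iff hb).mpr hs, rfl, rfl⟩ hw ?_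
  rintro C ⟨r', hr', σ', hs', ha, rfl⟩
  obtain ⟨e, he, heD⟩ :=
    hsat.exists_headChoice_le_promote hDc hr' (((satC_promote_iff hb).mp hs').mono hbD)
  obtain ⟨c, rfl⟩ := exists_eq_unitCDB_of_mem_headChoice he
  refine ⟨_, he, ?_⟩
  rw [ha] at heD ⊢
  rw [unitCDB_le_iff, unitCDB_apply_self, ← promote_eq_just hDc hwD]
  exact unitCDB_le_iff.mp heD

lemma Saturated.algStep_promote_insert (hsat : Saturated P D) (hDc : Consistent D)
    (hr : r ∈ P) (hs : satF σ r.prems b) {a : Attr} (ha : r.head.groundAttr σ = a)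
    {w : GTerm} (hw : unitCDB a (.just w) ∈ headChoice σ r.head)
    (hbD : insert ⟨a, w⟩ b ⊆ D) : AlgStep P (promote b) (promote (insert ⟨a, w⟩ b)) := by
  subst ha
  have hb : b ⊆ D := (Set.subset_insert _ _).trans hbD
  have hc := hDc.mono hbD
  have hca := promote_eq_just hc (Set.mem_insert _ _)
  refine ⟨(hsat.TP_promote_nonempty hDc hb).ne_empty, r.head.groundAttr σ,
    mem_choiceSJoin_pair (hsat.unitCDB_mem_TPa hDc hb hr hs hw (hbD (Set.mem_insert _ _)))
      (promote_mono (Set.subset_insert _ _) hc) ?_ fun a => ?_⟩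
  · rw [unitCDB_le_iff, hca]
  · rcases eq_or_ne a (r.head.groundAttr σ) with rfl | ha
    · exact .inr (by rw [unitCDB_apply_self, hca])
    · exact .inl (promote_insert_apply_of_ne hc ha).symm

lemma Saturated.reflTransGen_algStep_of_step (hsat : Saturated P D) (hDc : Consistent D)
    (h : Step P b c) (hcD : c ⊆ D) :
    Relation.ReflTransGen (AlgStep P) (promote b) (promote c) := by
  obtain ⟨S, hev, hmem⟩ := h
  cases hev with
  | triv => rw [Set.mem_singleton_iff.mp hmem]
  | closed hr hH hs =>
      obtain ⟨v, hv, rfl, -⟩ := hmem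
      exact .single (hsat.algStep_promote_insert hDc hr hs (by rw [hH]; rfl)
        (by rw [hH]; exact ⟨v, hv, rfl⟩) hcD)
  | opn hr hH hs =>
      rcases hmem with hmem | ⟨rfl, -⟩
      · rw [Set.mem_singleton_iff.mp hmem]
      · exact .single (hsat.algStep_promote_insert hDc hr hs (by rw [hH]; rfl)
          (by rw [hH]; exact Set.mem_insert _ _) hcD)

lemma Saturated.reflTransGen_algStep_of_reflTransGen_step (hsat : Saturated P D)
    (hDc : Consistent D) (h : Relation.ReflTransGen (Step P) b c) (hcD : c ⊆ D) :
    Relation.ReflTransGen (AlgStep P) (promote b) (promote c) := by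
  induction h with
  | refl => rfl
  | tail _ hstep ih =>
      exact (ih (hstep.subset.trans hcD)).trans (hsat.reflTransGen_algStep_of_step hDc hstep hcD)

end Saturation

/-- Completeness of the algorithm: if `∅ … D` is a fact-set step sequence and `D`
is saturated, then there is an algorithmic step sequence from `⊥` to `(D)⁺`, and
`(D)⁺` is a model of `P`. -/
theorem algorithm_completeness (P : Program) (hP : Program.WFP P) (D : Set Fact)
    (hseq : Relation.ReflTransGen (Step P) ∅ D) (hsat : Saturated P D) :
    Relation.ReflTransGen (AlgStep P) cdbBot (promote D) ∧
      TP P (promote D) = {promote D} := by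
  have hDc : Consistent D := consistent_of_reflTransGen_step hseq
  refine ⟨?_, hsat.TP_promote_eq_singleton hDc⟩
  rw [← promote_empty]
  exact hsat.reflTransGen_algStep_of_reflTransGen_step hDc hseq subset_rfl

end FCLP
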